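/- Let T be the n×n exponential correlation matrix with coefficient ρ, 0 ≤ |ρ| < 1, where n = j-i+1. If n is odd, the largest eigenvalue of T is at most (1+|ρ|)/(1−|ρ|) − 2|ρ|^{(n+1)/2}/(1−|ρ|); if n is even, it is at most (1+|ρ|)(1−|ρ|^{n/2})/(1−|ρ|). -/

import Mathlib

/-!
By Gershgorin's theorem every eigenvalue of a Hermitian matrix is at most its largest absolute
row sum. Row `m` of the exponential correlation matrix has absolute row sum
`∑_{j<n} r^|j-m| = (1 + r - r^(m+1) - r^(n-m)) / (1 - r)` with `r = |ρ|`, and since `x ↦ r^x` is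
convex, `r^a + r^b` with `a + b = n + 1` is smallest for the most balanced split
`{⌊(n+1)/2⌋, ⌈(n+1)/2⌉}`, which yields the two parity cases.
-/

open Matrix Finset

theorem Matrix.IsHermitian.hasEigenvalue_eigenvalues {𝕜 n : Type*} [RCLike 𝕜] [Fintype n]
    [DecidableEq n] {A : Matrix n n 𝕜} (hA : A.IsHermitian) (k : n) :
    Module.End.HasEigenvalue (toLin' A) (hA.eigenvalues k : 𝕜) := by
  refine Module.End.hasEigenvalue_of_hasEigenvector (x := ⇑(hA.eigenvectorBasis k)) ⟨?_, ?_⟩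
  · rw [Module.End.mem_eigenspace_iff, toLin'_apply, hA.mulVec_eigenvectorBasis,
      RCLike.real_smul_eq_coe_smul (K := 𝕜)]
  · exact fun h => hA.eigenvectorBasis.orthonormal.ne_zero k (WithLp.ofLp_injective 2 h)

theorem Matrix.IsHermitian.abs_eigenvalues_le_of_forall_sum_norm_le {𝕜 n : Type*} [RCLike 𝕜]
    [Fintype n] [DecidableEq n] {A : Matrix n n 𝕜} (hA : A.IsHermitian) {c : ℝ}
    (hc : ∀ i, ∑ j, ‖A i j‖ ≤ c) (k : n) : |hA.eigenvalues k| ≤ c := by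
  obtain ⟨i, hi⟩ := eigenvalue_mem_ball (hA.hasEigenvalue_eigenvalues k)
  rw [mem_closedBall_iff_norm] at hi
  calc |hA.eigenvalues k| = ‖(hA.eigenvalues k : 𝕜)‖ := (RCLike.norm_ofReal _).symm
    _ ≤ ‖(hA.eigenvalues k : 𝕜) - A i i‖ + ‖A i i‖ := norm_le_norm_sub_add _ _
    _ ≤ ∑ j ∈ univ.erase i, ‖A i j‖ + ‖A i i‖ := by gcongr
    _ = ∑ j, ‖A i j‖ := sum_erase_add _ _ (mem_univ i)
    _ ≤ c := hc i

theorem mul_sum_range_pow_dist {R : Type*} [CommRing R] (r : R) {m n : ℕ} (hmn : m < n) :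
    (1 - r) * ∑ j ∈ range n, r ^ Nat.dist j m = 1 + r - r ^ (m + 1) - r ^ (n - m) := by
  induction n, hmn using Nat.le_induction with
  | base =>
    rw [← sum_range_reflect, mul_comm]
    have : ∀ j ∈ range (m + 1), r ^ Nat.dist (m + 1 - 1 - j) m = r ^ j := fun j hj => by
      have := mem_range.mp hj
      rw [Nat.dist_eq_sub_of_le (by omega)]; congr 1; omega
    rw [sum_congr rfl this, geom_sum_mul_neg, show m.succ - m = 1 by omega, pow_one]
    ring
  | succ n hmn ih =>
    rw [sum_range_succ, mul_add, ih, Nat.dist_eq_sub_of_le_right (by omega : m ≤ n),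
      show n + 1 - m = n - m + 1 by omega, pow_succ]
    ring

theorem pow_add_pow_le_pow_add_pow {R : Type*} [CommRing R] [LinearOrder R]
    [IsStrictOrderedRing R] {r : R} (h0 : 0 ≤ r) (h1 : r ≤ 1) {a b c d : ℕ}
    (hac : a ≤ c) (hcb : c ≤ b) (habcd : a + b = c + d) : r ^ c + r ^ d ≤ r ^ a + r ^ b := by
  obtain ⟨e, rfl⟩ := Nat.exists_eq_add_of_le hac
  obtain rfl : b = d + e := by omega
  have hd : r ^ d ≤ r ^ a := pow_le_pow_of_le_one h0 h1 (by omega)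
  have he : r ^ e ≤ 1 := pow_le_one₀ h0 h1
  rw [pow_add, pow_add]
  nlinarith [pow_nonneg h0 e]

theorem pow_add_pow_le_of_add_eq {R : Type*} [CommRing R] [LinearOrder R]
    [IsStrictOrderedRing R] {r : R} (h0 : 0 ≤ r) (h1 : r ≤ 1) {a b m : ℕ} (hab : a + b = m) :
    r ^ (m / 2) + r ^ (m - m / 2) ≤ r ^ a + r ^ b := by
  wlog hle : a ≤ b generalizing a b
  · rw [add_comm (r ^ a)]
    exact this (by omega) (by omega)
  exact pow_add_pow_le_pow_add_pow h0 h1 (by omega) (by omega) (by omega)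

theorem one_add_sub_pow_sub_pow_div_le {r : ℝ} (h0 : 0 ≤ r) (h1 : r < 1) {n a b : ℕ}
    (hab : a + b = n + 1) :
    (1 + r - r ^ a - r ^ b) / (1 - r) ≤
      if Odd n then (1 + r) / (1 - r) - 2 * r ^ ((n + 1) / 2) / (1 - r)
      else (1 + r) * (1 - r ^ (n / 2)) / (1 - r) := by
  have hbal := pow_add_pow_le_of_add_eq h0 h1.le hab
  have hr : 0 < 1 - r := by linarith
  split_ifs with hn
  · obtain ⟨k, rfl⟩ := hn
    rw [show (2 * k + 1 + 1) - (2 * k + 1 + 1) / 2 = (2 * k + 1 + 1) / 2 by omega] at hbal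
    rw [← sub_div]
    gcongr ?_ / _
    linarith
  · obtain ⟨k, rfl⟩ := Nat.not_odd_iff_even.mp hn
    rw [show (k + k + 1) / 2 = k by omega, show k + k + 1 - k = k + 1 by omega, pow_succ] at hbal
    rw [show (k + k) / 2 = k by omega]
    gcongr ?_ / _
    linarith

def expCorrMatrix {𝕜 : Type*} [RCLike 𝕜] (n : ℕ) (ρ : 𝕜) : Matrix (Fin n) (Fin n) 𝕜 :=
  of fun m k => if (m : ℕ) < k then ρ ^ ((k : ℕ) - m) else if m = k then 1
    else (starRingEnd 𝕜 ρ) ^ ((m : ℕ) - k)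

theorem norm_expCorrMatrix_apply {𝕜 : Type*} [RCLike 𝕜] {n : ℕ} (ρ : 𝕜) (m k : Fin n) :
    ‖expCorrMatrix n ρ m k‖ = ‖ρ‖ ^ Nat.dist k m := by
  rcases lt_trichotomy (m : ℕ) k with h | h | h
  · simp [expCorrMatrix, Fin.lt_def.mpr h, Nat.dist_eq_sub_of_le_right h.le]
  · simp [expCorrMatrix, Fin.ext h]
  · simp [expCorrMatrix, (Fin.lt_def.mpr h).not_gt, Fin.ne_of_gt h, Nat.dist_eq_sub_of_le h.le]

theorem sum_norm_expCorrMatrix_row {𝕜 : Type*} [RCLike 𝕜] {n : ℕ} {ρ : 𝕜} (hρ : ‖ρ‖ ≠ 1)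
    (m : Fin n) :
    ∑ k, ‖expCorrMatrix n ρ m k‖ =
      (1 + ‖ρ‖ - ‖ρ‖ ^ ((m : ℕ) + 1) - ‖ρ‖ ^ (n - m)) / (1 - ‖ρ‖) := by
  rw [eq_div_iff (sub_ne_zero.mpr hρ.symm), mul_comm, ← mul_sum_range_pow_dist _ m.isLt]
  simp only [norm_expCorrMatrix_apply, Fin.sum_univ_eq_sum_range (fun k => ‖ρ‖ ^ Nat.dist k m)]

/-- Upper bound on the largest eigenvalue of the n×n exponential correlation
matrix, depending on the parity of n (Proposition 1, upper bound). -/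
theorem exp_corr_max_eigenvalue_upper_bound (n : ℕ) (hn : 1 ≤ n)
    (ρ : ℂ) (hρ : ‖ρ‖ < 1)
    (T : Matrix (Fin n) (Fin n) ℂ)
    (hT : T = Matrix.of fun m k : Fin n =>
      if (m : ℕ) < (k : ℕ) then ρ ^ ((k : ℕ) - (m : ℕ))
      else if m = k then 1
      else (starRingEnd ℂ ρ) ^ ((m : ℕ) - (k : ℕ)))
    (hHerm : T.IsHermitian) :
    (⨆ k, hHerm.eigenvalues k) ≤
      if Odd n then
        (1 + ‖ρ‖) / (1 - ‖ρ‖) -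
          2 * (‖ρ‖) ^ ((n + 1) / 2) / (1 - ‖ρ‖)
      else (1 + ‖ρ‖) * (1 - (‖ρ‖) ^ (n / 2)) /
        (1 - ‖ρ‖) := by
  have : Nonempty (Fin n) := ⟨⟨0, hn⟩⟩
  change T = expCorrMatrix n ρ at hT
  subst hT
  refine ciSup_le fun k => (abs_le.mp (hHerm.abs_eigenvalues_le_of_forall_sum_norm_le
    (fun m => ?_) k)).2
  rw [sum_norm_expCorrMatrix_row hρ.ne]
  exact one_add_sub_pow_sub_pow_div_le (norm_nonneg ρ) hρ (by omega)
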